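/- arXiv:1301.0079 — 3 statements merged into one kernel-verified Lean document; each statement's English description precedes it below -/
import Mathlib

section
/- Let X, Y be finite random variables with joint pmf P, G the characteristic graph of X (edges between confusable pairs). Then the zero-distortion value of the zero-delay rate-distortion function equals L_Y(X); precisely, min over pairs (f,h), with f: 𝒳 → 𝒵 and h: 𝒵 × 𝒴 → 𝒳 satisfying h(y, f(x)) = x for all (x,y) with P(x,y) > 0, of L_Y(f(X)), is equal to L_Y(X). -/
open scoped BigOperators

def Confusable {X Y : Type} [Fintype Y] (P : X → Y → ℝ) (x x' : X) : Prop :=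
  x ≠ x' ∧ ∃ y : Y, 0 < P x y ∧ 0 < P x' y

def RIvalid {X Y : Type} [Fintype Y] (P : X → Y → ℝ) (φ : X → List Bool) : Prop :=
  ∀ x x', Confusable P x x' → ¬ (φ x <+: φ x')

noncomputable def expLen {X Y : Type} [Fintype X] [Fintype Y]
    (P : X → Y → ℝ) (φ : X → List Bool) : ℝ :=
  ∑ x, (∑ y, P x y) * ((φ x).length : ℝ)

/-- `L_Y(W)`: minimal expected RI-protocol length for the joint pmf of `(W,Y)`. -/
noncomputable def LY {W Y : Type} [Fintype W] [Fintype Y] (Q : W → Y → ℝ) : ℝ :=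
  sInf {r : ℝ | ∃ φ : W → List Bool, RIvalid Q φ ∧ r = expLen Q φ}

/-- Joint pmf of `(f(X), Y)` induced by `f` and the joint pmf of `(X,Y)`. -/
noncomputable def push {X Y Z : Type} [Fintype X] [DecidableEq Z]
    (P : X → Y → ℝ) (f : X → Z) : Z → Y → ℝ :=
  fun z y => ∑ x with f x = z, P x y


/-! Every RI protocol for `(f(X), Y)` composes with `f` into one for `(X, Y)` of the same expected
length, as soon as `f` separates confusable symbols; a zero-error decoder forces exactly that.
Hence `L_Y(X) ≤ L_Y(f(X))` for every admissible `f`, and `f = id` attains the bound. -/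

theorem List.replicate_true_append_false_prefix_iff (a b : ℕ) :
    List.replicate a true ++ [false] <+: List.replicate b true ++ [false] ↔ a = b := by
  refine ⟨fun h => ?_, fun h => h ▸ List.prefix_refl _⟩
  induction a generalizing b with
  | zero => cases b <;> simp_all [List.replicate_succ]
  | succ a ih =>
    cases b with
    | zero => simp [List.replicate_succ] at h
    | succ b => simpa using ih b (by simpa [List.replicate_succ] using h)

section Protocols

variable {X Y : Type} [Fintype X] [Fintype Y]

theorem exists_RIvalid (P : X → Y → ℝ) : ∃ φ : X → List Bool, RIvalid P φ := by
  let e := Fintype.equivFin X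
  refine ⟨fun x => List.replicate (e x) true ++ [false], fun x x' hxx' hpre => hxx'.1 ?_⟩
  rw [List.replicate_true_append_false_prefix_iff] at hpre
  exact e.injective (Fin.ext hpre)

theorem expLen_nonneg {P : X → Y → ℝ} (hP : ∀ x y, 0 ≤ P x y) (φ : X → List Bool) :
    0 ≤ expLen P φ :=
  Finset.sum_nonneg fun x _ =>
    mul_nonneg (Finset.sum_nonneg fun y _ => hP x y) (Nat.cast_nonneg _)

theorem LY_le_expLen {P : X → Y → ℝ} (hP : ∀ x y, 0 ≤ P x y) {φ : X → List Bool}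
    (hφ : RIvalid P φ) : LY P ≤ expLen P φ :=
  csInf_le ⟨0, by rintro r ⟨ψ, -, rfl⟩; exact expLen_nonneg hP ψ⟩ ⟨φ, hφ, rfl⟩

theorem le_LY {P : X → Y → ℝ} {r : ℝ} (hr : ∀ φ, RIvalid P φ → r ≤ expLen P φ) :
    r ≤ LY P := by
  obtain ⟨φ, hφ⟩ := exists_RIvalid P
  exact le_csInf ⟨_, φ, hφ, rfl⟩ fun _ ⟨ψ, hψ, hr'⟩ => hr' ▸ hr ψ hψ

end Protocols

section Push

variable {X Y Z : Type} [Fintype X] [DecidableEq Z]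

theorem push_id [DecidableEq X] (P : X → Y → ℝ) : push P id = P := by
  funext x y
  simp [push, Finset.sum_filter, Finset.sum_ite_eq']

theorem expLen_push [Fintype Y] [Fintype Z] (P : X → Y → ℝ) (f : X → Z) (φ : Z → List Bool) :
    expLen (push P f) φ = expLen P (φ ∘ f) := by
  unfold expLen push
  rw [← Finset.sum_fiberwise Finset.univ f]
  refine Finset.sum_congr rfl fun z _ => ?_
  rw [Finset.sum_comm, Finset.sum_mul]
  refine Finset.sum_congr rfl fun x hx => ?_
  rw [Function.comp_apply, (Finset.mem_filter.mp hx).2]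

theorem push_pos {P : X → Y → ℝ} (hP : ∀ x y, 0 ≤ P x y) (f : X → Z) {x : X} {y : Y}
    (hxy : 0 < P x y) : 0 < push P f (f x) y :=
  Finset.sum_pos' (fun x' _ => hP x' y) ⟨x, Finset.mem_filter.mpr ⟨Finset.mem_univ x, rfl⟩, hxy⟩

theorem Confusable.push [Fintype Y] {P : X → Y → ℝ} (hP : ∀ x y, 0 ≤ P x y) {f : X → Z} {x x' : X}
    (hxx' : Confusable P x x') (hf : f x ≠ f x') : Confusable (push P f) (f x) (f x') :=
  let ⟨_, y, hy, hy'⟩ := hxx'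
  ⟨hf, y, push_pos hP f hy, push_pos hP f hy'⟩

theorem RIvalid.comp [Fintype Y] {P : X → Y → ℝ} (hP : ∀ x y, 0 ≤ P x y) {f : X → Z}
    (hf : ∀ x x', Confusable P x x' → f x ≠ f x') {φ : Z → List Bool}
    (hφ : RIvalid (push P f) φ) : RIvalid P (φ ∘ f) :=
  fun x x' hxx' => hφ (f x) (f x') (hxx'.push hP (hf x x' hxx'))

/-- `L_Y(X) ≤ L_Y(f(X))` for any colouring `f` of the characteristic graph. -/
theorem LY_le_LY_push [Fintype Y] [Fintype Z] {P : X → Y → ℝ} (hP : ∀ x y, 0 ≤ P x y) {f : X → Z}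
    (hf : ∀ x x', Confusable P x x' → f x ≠ f x') : LY P ≤ LY (push P f) :=
  le_LY fun φ hφ => expLen_push P f φ ▸ LY_le_expLen hP (hφ.comp hP hf)

end Push

theorem Confusable.ne_of_decoder {X Y Z : Type} [Fintype Y] {P : X → Y → ℝ} {f : X → Z}
    {h : Y → Z → X} (hh : ∀ x y, 0 < P x y → h y (f x) = x) {x x' : X}
    (hxx' : Confusable P x x') : f x ≠ f x' := by
  obtain ⟨hne, y, hy, hy'⟩ := hxx'
  intro hfx
  exact hne (by rw [← hh x y hy, hfx, hh x' y hy'])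

theorem zero_distortion_LY_general {X Y : Type} [Fintype X] [Fintype Y] [DecidableEq X]
    (P : X → Y → ℝ)
    (hP0 : ∀ x y, 0 ≤ P x y) :
    sInf {r : ℝ | ∃ (f : X → X) (h : Y → X → X),
        (∀ x y, 0 < P x y → h y (f x) = x) ∧ r = LY (push P f)} = LY P := by
  refine IsLeast.csInf_eq ⟨⟨id, fun _ x => x, fun _ _ _ => rfl, by rw [push_id]⟩, ?_⟩
  rintro r ⟨f, h, hh, rfl⟩
  exact LY_le_LY_push hP0 fun x x' => Confusable.ne_of_decoder hh

/-- the zero-distortion value of the zero-delay rate-distortion function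
is `L_Y(X)`: the minimum of `L_Y(f(X))` over encoder/decoder pairs `(f,h)` achieving
zero error on the support of `P` (with `|𝒵| ≤ |𝒳|`, so w.l.o.g. `𝒵 = 𝒳`) equals `L_Y(X)`. -/
theorem zero_distortion_LY {X Y : Type} [Fintype X] [Fintype Y] [DecidableEq X]
    (P : X → Y → ℝ)
    (hP0 : ∀ x y, 0 ≤ P x y)
    (hP1 : ∑ x, ∑ y, P x y = 1) :
    sInf {r : ℝ | ∃ (f : X → X) (h : Y → X → X),
        (∀ x y, 0 < P x y → h y (f x) = x) ∧ r = LY (push P f)} = LY P :=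
  zero_distortion_LY_general P hP0
end

section
/- Consider a uniform source X over an alphabet of size M ≥ 2, Hamming distortion, and side information Y with P(Y=x | X=x) = 1−p and P(Y=y | X=x) = p/(M−1) for y ≠ x, where 0 < p < 1. For any partition of the source alphabet into K nonempty subsets with the decoder outputting the maximum-likelihood estimate given the subset index and Y, the resulting expected Hamming distortion equals (p/(M−1))·(M − K). -/
/-! If `X = x` lies in the cell `B` with representative `r`, the decoder errs exactly on the side
information `y ≠ x` in `B`, and also on every `y ∉ B` unless `x = r`; each such `y` has
probability `p / (M - 1)`. A cell therefore contributes `(|B| - 1) + (|B| - 1)(M - 1) = (|B| - 1) M`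
erroneous pairs `(x, y)`, and since the cell sizes add up to `M`, there are `M (M - K)` in all. -/

open Finset Function

section Partition

variable {α ι : Type*} [Fintype α] [DecidableEq ι]
  {A : ι → Finset α} {e : α → ι}

lemma filter_eq_of_pairwise_disjoint (hdisj : Pairwise (Disjoint on A))
    (he : ∀ x, x ∈ A (e x)) (z : ι) : ({x | e x = z} : Finset α) = A z := by
  ext x
  simp only [mem_filter, mem_univ, true_and]
  refine ⟨fun hxz => hxz ▸ he x, fun hx => ?_⟩
  by_contra hxz
  exact disjoint_left.mp (hdisj hxz) (he x) hx

lemma sum_eq_sum_sum_of_pairwise_disjoint [Fintype ι] {β : Type*} [AddCommMonoid β]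
    (hdisj : Pairwise (Disjoint on A)) (he : ∀ x, x ∈ A (e x)) (F : ι → α → β) :
    ∑ x, F (e x) x = ∑ z, ∑ x ∈ A z, F z x := by
  rw [← sum_fiberwise univ e fun x => F (e x) x]
  refine sum_congr rfl fun z _ => ?_
  calc ∑ x ∈ {x | e x = z}, F (e x) x = ∑ x ∈ {x | e x = z}, F z x :=
        sum_congr rfl fun x hx => by rw [(mem_filter.1 hx).2]
    _ = ∑ x ∈ A z, F z x := by rw [filter_eq_of_pairwise_disjoint hdisj he]

lemma sum_card_eq_card_of_pairwise_disjoint [Fintype ι] (hdisj : Pairwise (Disjoint on A))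
    (he : ∀ x, x ∈ A (e x)) : ∑ z, #(A z) = Fintype.card α := by
  calc ∑ z, #(A z) = ∑ z, ∑ x ∈ A z, 1 := by simp only [card_eq_sum_ones]
    _ = ∑ _ : α, 1 := (sum_eq_sum_sum_of_pairwise_disjoint hdisj he fun _ _ => 1).symm
    _ = Fintype.card α := by simp

end Partition

section Decoder

variable {α : Type*} [DecidableEq α]

def cellDecode (B : Finset α) (r y : α) : α := if y ∈ B then y else r

lemma cellDecode_of_mem {B : Finset α} {y : α} (r : α) (hy : y ∈ B) :
    cellDecode B r y = y :=
  if_pos hy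

lemma filter_cellDecode_ne [Fintype α] {B : Finset α} {r x : α} (hx : x ∈ B) :
    ({y | cellDecode B r y ≠ x} : Finset α) =
      if r = x then B.erase x else univ.erase x := by
  ext y
  unfold cellDecode
  split_ifs <;> aesop

lemma card_filter_cellDecode_ne [Fintype α] {B : Finset α} {r x : α} (hx : x ∈ B) :
    #({y | cellDecode B r y ≠ x} : Finset α) =
      if r = x then #B - 1 else Fintype.card α - 1 := by
  rw [filter_cellDecode_ne hx]
  split_ifs
  · exact card_erase_of_mem hx
  · exact card_erase_of_mem (mem_univ x)

lemma sum_card_filter_cellDecode_ne [Fintype α] {B : Finset α} {r : α} (hr : r ∈ B) :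
    ∑ x ∈ B, (#({y | cellDecode B r y ≠ x} : Finset α) : ℝ) =
      ((#B : ℝ) - 1) * Fintype.card α := by
  have hN : 1 ≤ Fintype.card α := Fintype.card_pos_iff.2 ⟨r⟩
  have hB : 1 ≤ #B := card_pos.2 ⟨r, hr⟩
  rw [← add_sum_erase B _ hr, card_filter_cellDecode_ne hr, if_pos rfl,
    sum_congr rfl fun x hx => by
      rw [card_filter_cellDecode_ne (mem_of_mem_erase hx), if_neg (ne_of_mem_erase hx).symm],
    sum_const, card_erase_of_mem hr]
  simp only [nsmul_eq_mul, Nat.cast_sub hN, Nat.cast_sub hB, Nat.cast_one]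
  ring

lemma sum_ite_eq_mul_card_filter_ne [Fintype α] {x : α} {g : α → α} (hg : g x = x) (s t : ℝ) :
    ∑ y, (if y = x then s else t) * (if g y = x then 0 else 1) =
      t * #({y | g y ≠ x} : Finset α) := by
  rw [← sum_boole, mul_sum]
  refine sum_congr rfl fun y _ => ?_
  by_cases hyx : y = x
  · subst hyx; simp [hg]
  · simp only [if_neg hyx]; split_ifs <;> simp_all

end Decoder

theorem uniform_source_partition_distortion_general
    {α : Type} [Fintype α] [DecidableEq α]
    (M : ℕ) (hM : Fintype.card α = M) (hM2 : 2 ≤ M)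
    (p : ℝ)
    (K : ℕ) (A : Fin K → Finset α)
    (hdisj : ∀ z z', z ≠ z' → Disjoint (A z) (A z'))
    (e : α → Fin K) (he : ∀ x, x ∈ A (e x))
    (a : Fin K → α) (ha : ∀ z, a z ∈ A z) :
    (∑ x : α, ∑ y : α,
        ((1 / (M:ℝ)) * (if y = x then 1 - p else p / ((M:ℝ) - 1))) *
          (if (if y ∈ A (e x) then y else a (e x)) = x then 0 else 1)) =
      (p / ((M:ℝ) - 1)) * ((M:ℝ) - K) := by
  have hM0 : (M : ℝ) ≠ 0 := by norm_cast; omega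
  have hcells : ∑ z, ((#(A z) : ℝ) - 1) = M - K := by
    rw [sum_sub_distrib, ← Nat.cast_sum, sum_card_eq_card_of_pairwise_disjoint hdisj he, hM]
    simp
  calc _ = ∑ x, 1 / (M : ℝ) * (p / (M - 1) *
        #({y | cellDecode (A (e x)) (a (e x)) y ≠ x} : Finset α)) := by
        refine sum_congr rfl fun x _ => ?_
        simp only [mul_assoc, ← mul_sum]
        exact congrArg (1 / (M : ℝ) * ·) (sum_ite_eq_mul_card_filter_ne
          (g := cellDecode (A (e x)) (a (e x))) (cellDecode_of_mem _ (he x)) _ _)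
    _ = 1 / M * (p / (M - 1)) * ∑ z, ((#(A z) : ℝ) - 1) * M := by
        rw [← mul_sum, ← mul_sum, ← mul_assoc,
          sum_eq_sum_sum_of_pairwise_disjoint hdisj he
            fun z x => (#({y | cellDecode (A z) (a z) y ≠ x} : Finset α) : ℝ)]
        simp only [sum_card_filter_cellDecode_ne (ha _), hM]
    _ = _ := by
        rw [← sum_mul, hcells]
        field_simp

/-- uniform source over `M` symbols, symmetric side-information channel
with crossover `p`, Hamming distortion. For any partition into `K` nonempty subsets,
with the maximum-likelihood decoder (output `y` if `y` lies in the announced subset,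
otherwise a fixed representative of the subset), the expected Hamming distortion is
`(p/(M−1))·(M−K)`. -/
theorem uniform_source_partition_distortion
    {α : Type} [Fintype α] [DecidableEq α]
    (M : ℕ) (hM : Fintype.card α = M) (hM2 : 2 ≤ M)
    (p : ℝ) (hp0 : 0 < p) (hp1 : p < ((M:ℝ) - 1) / M)
    (K : ℕ) (A : Fin K → Finset α)
    (hne : ∀ z, (A z).Nonempty)
    (hdisj : ∀ z z', z ≠ z' → Disjoint (A z) (A z'))
    (hcover : ∀ x : α, ∃ z, x ∈ A z)
    (e : α → Fin K) (he : ∀ x, x ∈ A (e x))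
    (a : Fin K → α) (ha : ∀ z, a z ∈ A z) :
    (∑ x : α, ∑ y : α,
        ((1 / (M:ℝ)) * (if y = x then 1 - p else p / ((M:ℝ) - 1))) *
          (if (if y ∈ A (e x) then y else a (e x)) = x then 0 else 1)) =
      (p / ((M:ℝ) - 1)) * ((M:ℝ) - K) :=
  uniform_source_partition_distortion_general M hM hM2 p K A hdisj e he a ha
end

section
/- Let X be uniform over {0,1,2,3,4} and let Y be obtained from X by the 'typewriter' channel P(Y=x|X=x) = P(Y=x+1 mod 5|X=x) = 1/2, so the characteristic graph of (X,Y) is the 5-cycle C₅. Any RI protocol whose codeword assignment factors through a proper 3-coloring of C₅ (symbols with the same color get the same codeword, and codewords of any two distinct colors must satisfy the mutual prefix-free condition because the color graph of a minimal coloring of C₅ is complete) has expected length at least 8/5, whereas there exists a valid RI protocol (using four distinct codewords) with expected length 7/5. -/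
open scoped BigOperators

/-- Adjacency of the 5-cycle `C₅` on `Fin 5` (characteristic graph of the
"typewriter" channel on 5 symbols). -/
def AdjC5 (x y : Fin 5) : Prop := x ≠ y ∧ (y = x + 1 ∨ x = y + 1)

/-! The lower bound is a double count over the edges of `C₅`: adjacent symbols get distinct
colors, and among three mutually prefix-free binary words any two have total length at least 3
(two one-letter words would be `0` and `1`, leaving no room for the third). Summing over the five
edges counts every symbol twice, so twice the total length is at least `15`, hence the total is at
least `8`. For `7/5`, an RI protocol only needs adjacent symbols to be prefix-incomparable, so the
codewords `00, 1, 0, 1, 01` around the cycle suffice. -/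

theorem singleton_prefix_or_singleton_prefix {a b : Bool} (hab : a ≠ b) {z : List Bool}
    (hz : z ≠ []) : [a] <+: z ∨ [b] <+: z := by
  obtain ⟨c, t, rfl⟩ := List.exists_cons_of_ne_nil hz
  cases a <;> cases b <;> cases c <;> simp_all

theorem three_le_length_add_length {ι : Type*} {w : ι → List Bool}
    (hw : ∀ i j, i ≠ j → ¬ w i <+: w j) {i j k : ι}
    (hij : i ≠ j) (hik : i ≠ k) (hjk : j ≠ k) :
    3 ≤ (w i).length + (w j).length := by
  have ne_nil : ∀ {a b}, a ≠ b → w a ≠ [] := fun hab h => hw _ _ hab (h ▸ List.nil_prefix)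
  have hi := List.length_pos_iff.2 (ne_nil hij)
  have hj := List.length_pos_iff.2 (ne_nil hij.symm)
  by_contra! hlt
  obtain ⟨a, ha⟩ := List.length_eq_one_iff.1 (show (w i).length = 1 by omega)
  obtain ⟨b, hb⟩ := List.length_eq_one_iff.1 (show (w j).length = 1 by omega)
  have hab : a ≠ b := by rintro rfl; exact hw i j hij (ha ▸ hb ▸ List.prefix_refl _)
  rcases singleton_prefix_or_singleton_prefix hab (ne_nil hik.symm) with h | h
  · exact hw i k hik (ha ▸ h)
  · exact hw j k hjk (hb ▸ h)

theorem two_mul_sum_eq_sum_add_comp_add {G : Type*} [AddGroup G] [Fintype G]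
    (f : G → ℕ) (g : G) : 2 * ∑ x, f x = ∑ x, (f x + f (x + g)) := by
  rw [Finset.sum_add_distrib, two_mul, ← Equiv.sum_comp (Equiv.addRight g) f]
  simp only [Equiv.coe_addRight]

theorem card_mul_le_two_mul_sum_of_le_add_comp_add {G : Type*} [AddGroup G] [Fintype G]
    {f : G → ℕ} {g : G} {m : ℕ} (h : ∀ x, m ≤ f x + f (x + g)) :
    Fintype.card G * m ≤ 2 * ∑ x, f x := by
  rw [two_mul_sum_eq_sum_add_comp_add f g, ← smul_eq_mul, ← Finset.card_univ, ← Finset.sum_const]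
  exact Finset.sum_le_sum fun x _ => h x

theorem adjC5_add_one (x : Fin 5) : AdjC5 x (x + 1) := by
  revert x; unfold AdjC5; decide

theorem eight_le_sum_length_comp {c : Fin 5 → Fin 3} {w : Fin 3 → List Bool}
    (hc : ∀ x y, AdjC5 x y → c x ≠ c y) (hw : ∀ i j, i ≠ j → ¬ w i <+: w j) :
    8 ≤ ∑ x, (w (c x)).length := by
  have h : 5 * 3 ≤ 2 * ∑ x, (w (c x)).length := by
    refine card_mul_le_two_mul_sum_of_le_add_comp_add (g := (1 : Fin 5)) fun x => ?_
    obtain ⟨k, hk⟩ : ∃ k, c x ≠ k ∧ c (x + 1) ≠ k := by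
      generalize c x = a, c (x + 1) = b; revert a b; decide
    exact three_le_length_add_length hw (hc _ _ (adjC5_add_one x)) hk.1 hk.2
  omega

def pentagonCode : Fin 5 → List Bool :=
  ![[false, false], [true], [false], [true], [false, true]]

theorem pentagonCode_not_prefix {x y : Fin 5} (h : AdjC5 x y) :
    ¬ pentagonCode x <+: pentagonCode y := by
  revert x y; unfold AdjC5; decide

theorem sum_length_pentagonCode : ∑ x, (pentagonCode x).length = 7 := by
  decide

/-- for `X` uniform on `Fin 5` with typewriter side information
(characteristic graph `C₅`): every RI protocol that factors through a proper
3-coloring of `C₅` with mutually prefix-free color codewords has expected length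
at least `8/5`, while there exists a valid RI protocol (with four distinct
codewords) of expected length `7/5`. -/
theorem pentagon_coloring_vs_RI :
    (∀ (c : Fin 5 → Fin 3) (w : Fin 3 → List Bool),
      (∀ x y, AdjC5 x y → c x ≠ c y) →
      (∀ i j : Fin 3, i ≠ j → ¬ (w i <+: w j)) →
      (8 : ℝ) / 5 ≤ (1 / 5 : ℝ) * ∑ x : Fin 5, ((w (c x)).length : ℝ)) ∧
    (∃ φ : Fin 5 → List Bool,
      (∀ x y, AdjC5 x y → ¬ (φ x <+: φ y)) ∧
      (1 / 5 : ℝ) * ∑ x : Fin 5, ((φ x).length : ℝ) = 7 / 5) := by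
  refine ⟨fun c w hc hw => ?_, pentagonCode, fun _ _ => pentagonCode_not_prefix, ?_⟩
  · have : (8 : ℝ) ≤ ∑ x, ((w (c x)).length : ℝ) := by
      exact_mod_cast eight_le_sum_length_comp hc hw
    linarith
  · rw [← Nat.cast_sum, sum_length_pentagonCode]
    norm_num
end
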